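/- The global trace coordinates determine a conjugacy class of pairs: if A, B, A', B' ∈ SU(2) satisfy tr A = tr A', tr B = tr B', and tr(A·B) = tr(A'·B'), then there exists U ∈ SU(2) such that A' = U·A·U⁻¹ and B' = U·B·U⁻¹. -/

import Mathlib

noncomputable def SU2 : Subgroup (Matrix.unitaryGroup (Fin 2) ℂ) where
  carrier := {A | Matrix.det (A : Matrix (Fin 2) (Fin 2) ℂ) = 1}
  mul_mem' := by
    intro a b ha hb
    simp only [Set.mem_setOf_eq, Matrix.UnitaryGroup.mul_val, Matrix.det_mul] at *
    rw [ha, hb, mul_one]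
  one_mem' := by simp
  inv_mem' := by
    intro a ha
    simp only [Set.mem_setOf_eq, Matrix.UnitaryGroup.inv_val] at *
    show Matrix.det (star a.val) = 1
    rw [Matrix.star_eq_conjTranspose, Matrix.det_conjTranspose, ha, star_one]

noncomputable def matSU (A : SU2) : Matrix (Fin 2) (Fin 2) ℂ :=
  ((A : Matrix.unitaryGroup (Fin 2) ℂ) : Matrix (Fin 2) (Fin 2) ℂ)

noncomputable def trSU (A : SU2) : ℝ := (Matrix.trace (matSU A)).re


/-! An element of `SU(2)` with diagonal entry `a` is conjugate to `diag(μ, conj μ)` for every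
unit `μ` with `re μ = re a`: such a `μ` is an eigenvalue, and a unit left eigenvector is the
first row of a conjugating matrix. Conjugating `A` and `A'` to the same `D = diag(μ, conj μ)`,
it remains to carry `C = [[c, d], [-conj d, conj c]]` to `C'` by an element commuting with `D`,
knowing `tr C = tr C'` and `tr (D C) = tr (D C')`. If `D = ±1` equal traces suffice. Otherwise
the two traces determine `c`, hence `|d| = |d'|`, and `diag(ν, conj ν)` with `ν² = d'/d`
does it. -/

open Matrix Complex ComplexConjugate

lemma matSU_mul (A B : SU2) : matSU (A * B) = matSU A * matSU B := rfl

lemma matSU_one : matSU 1 = 1 := rfl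

lemma matSU_injective : Function.Injective matSU :=
  fun _ _ h => Subtype.ext (Subtype.ext h)

lemma star_matSU_eq_adjugate (A : SU2) : star (matSU A) = adjugate (matSU A) := by
  have hunit : star (matSU A) * matSU A = 1 := Matrix.mem_unitaryGroup_iff'.mp A.1.2
  have hadj : matSU A * adjugate (matSU A) = 1 := by
    rw [mul_adjugate, show (matSU A).det = 1 from A.2, one_smul]
  calc star (matSU A) = star (matSU A) * (matSU A * adjugate (matSU A)) := by rw [hadj, mul_one]
    _ = adjugate (matSU A) := by rw [← Matrix.mul_assoc, hunit, Matrix.one_mul]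

lemma matSU_one_one (A : SU2) : matSU A 1 1 = conj (matSU A 0 0) := by
  have h := congrFun (congrFun (star_matSU_eq_adjugate A) 0) 0
  rw [adjugate_fin_two] at h
  simp only [star_apply, of_apply, cons_val', cons_val_zero, empty_val', cons_val_fin_one,
    RCLike.star_def] at h
  exact h.symm

lemma matSU_one_zero (A : SU2) : matSU A 1 0 = -conj (matSU A 0 1) := by
  have h := congrFun (congrFun (star_matSU_eq_adjugate A) 0) 1
  rw [adjugate_fin_two] at h
  simp only [star_apply, of_apply, cons_val', cons_val_zero, cons_val_one, empty_val',
    cons_val_fin_one, RCLike.star_def] at h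
  rw [← map_neg, ← h, conj_conj]

lemma matSU_eq (A : SU2) :
    matSU A = !![matSU A 0 0, matSU A 0 1; -conj (matSU A 0 1), conj (matSU A 0 0)] := by
  rw [← matSU_one_one, ← matSU_one_zero, ← eta_fin_two]

lemma normSq_add_normSq_matSU (A : SU2) :
    normSq (matSU A 0 0) + normSq (matSU A 0 1) = 1 := by
  have hdet : (matSU A).det = 1 := A.2
  rw [matSU_eq A, det_fin_two_of] at hdet
  apply ofReal_injective
  push_cast
  rw [← mul_conj, ← mul_conj, ← hdet]
  ring

lemma trSU_eq (A : SU2) : trSU A = 2 * (matSU A 0 0).re := by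
  rw [trSU, trace_fin_two, matSU_one_one, add_re, conj_re, two_mul]

lemma trSU_mul_mul_inv (U A : SU2) : trSU (U * A * U⁻¹) = trSU A := by
  rw [trSU, trSU, matSU_mul, matSU_mul, trace_mul_cycle, ← matSU_mul, inv_mul_cancel, matSU_one,
    Matrix.one_mul]

section Construction

variable {a b : ℂ}

lemma mul_conj_add_mul_conj (h : normSq a + normSq b = 1) : a * conj a + b * conj b = 1 := by
  rw [mul_conj, mul_conj]
  exact_mod_cast h

lemma fin_two_mem_unitaryGroup (h : normSq a + normSq b = 1) :
    !![a, b; -conj b, conj a] ∈ unitaryGroup (Fin 2) ℂ := by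
  have h' := mul_conj_add_mul_conj h
  rw [mem_unitaryGroup_iff]
  ext i j
  fin_cases i <;> fin_cases j <;> simp [mul_apply, Fin.sum_univ_two]
  all_goals first | linear_combination h' | ring

lemma fin_two_mem_SU2 (h : normSq a + normSq b = 1) :
    (⟨_, fin_two_mem_unitaryGroup h⟩ : unitaryGroup (Fin 2) ℂ) ∈ SU2 := by
  show det !![a, b; -conj b, conj a] = 1
  rw [det_fin_two_of]
  linear_combination mul_conj_add_mul_conj h

noncomputable def mkSU (a b : ℂ) (h : normSq a + normSq b = 1) : SU2 :=
  ⟨⟨_, fin_two_mem_unitaryGroup h⟩, fin_two_mem_SU2 h⟩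

lemma matSU_mkSU (h : normSq a + normSq b = 1) :
    matSU (mkSU a b h) = !![a, b; -conj b, conj a] := rfl

end Construction

noncomputable def diagSU (μ : ℂ) (hμ : normSq μ = 1) : SU2 :=
  mkSU μ 0 (by rw [map_zero, add_zero, hμ])

lemma matSU_diagSU {μ : ℂ} (hμ : normSq μ = 1) :
    matSU (diagSU μ hμ) = !![μ, 0; 0, conj μ] := by
  rw [diagSU, matSU_mkSU, map_zero, neg_zero]

lemma trSU_diagSU_mul {μ : ℂ} (hμ : normSq μ = 1) (C : SU2) :
    trSU (diagSU μ hμ * C) = 2 * (μ * matSU C 0 0).re := by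
  rw [trSU_eq, matSU_mul, matSU_diagSU, mul_apply, Fin.sum_univ_two]
  simp

lemma det_matSU_sub_smul_eq_zero (A : SU2) {μ : ℂ} (hμ : normSq μ = 1)
    (hre : μ.re = (matSU A 0 0).re) : (matSU A - μ • 1).det = 0 := by
  have hA := mul_conj_add_mul_conj (normSq_add_normSq_matSU A)
  have hμμ : μ * conj μ = 1 := by rw [mul_conj, hμ, ofReal_one]
  have htr : matSU A 0 0 + conj (matSU A 0 0) = μ + conj μ := by
    rw [add_conj, add_conj, hre]
  rw [det_fin_two]
  simp only [Matrix.sub_apply, Matrix.smul_apply, one_apply_eq, one_apply_ne zero_ne_one,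
    one_apply_ne one_ne_zero, smul_eq_mul, mul_one, mul_zero, sub_zero]
  rw [matSU_one_one, matSU_one_zero]
  linear_combination hA - μ * htr - hμμ

lemma exists_unit_vecMul_eq_smul {M : Matrix (Fin 2) (Fin 2) ℂ} {μ : ℂ}
    (h : (M - μ • 1).det = 0) :
    ∃ v : Fin 2 → ℂ, normSq (v 0) + normSq (v 1) = 1 ∧ v ᵥ* M = μ • v := by
  obtain ⟨v, hv0, hv⟩ := exists_vecMul_eq_zero_iff.mpr h
  rw [vecMul_sub, vecMul_smul, vecMul_one, sub_eq_zero] at hv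
  set r := normSq (v 0) + normSq (v 1)
  have hr : 0 < r := by
    obtain ⟨i, hi⟩ := Function.ne_iff.mp hv0
    fin_cases i
    · exact add_pos_of_pos_of_nonneg (normSq_pos.mpr hi) (normSq_nonneg _)
    · exact add_pos_of_nonneg_of_pos (normSq_nonneg _) (normSq_pos.mpr hi)
  refine ⟨((Real.sqrt r)⁻¹ : ℂ) • v, ?_, by rw [smul_vecMul, hv, smul_comm]⟩
  simp only [Pi.smul_apply, smul_eq_mul, normSq_mul, normSq_inv, normSq_ofReal]
  rw [← mul_add, Real.mul_self_sqrt hr.le, inv_mul_cancel₀ hr.ne']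

lemma mkSU_mul_eq_diagSU_mul (A : SU2) {μ : ℂ} (hμ : normSq μ = 1) {v : Fin 2 → ℂ}
    (hv : normSq (v 0) + normSq (v 1) = 1) (h : v ᵥ* matSU A = μ • v) :
    mkSU (v 0) (v 1) hv * A = diagSU μ hμ * mkSU (v 0) (v 1) hv := by
  have h0 := congrFun h 0
  have h1 := congrFun h 1
  simp only [vecMul, dotProduct, Fin.sum_univ_two, Pi.smul_apply, smul_eq_mul,
    matSU_one_one, matSU_one_zero] at h0 h1
  have c0 := congrArg conj h0
  have c1 := congrArg conj h1
  simp only [map_add, map_mul, map_neg, conj_conj] at c0 c1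
  apply matSU_injective
  rw [matSU_mul, matSU_mul, matSU_mkSU, matSU_diagSU, matSU_eq A]
  ext i j
  fin_cases i <;> fin_cases j <;> simp [mul_apply, Fin.sum_univ_two]
  · linear_combination h0
  · linear_combination h1
  · linear_combination -c1
  · linear_combination c0

lemma exists_conj_eq_diagSU (A : SU2) {μ : ℂ} (hμ : normSq μ = 1)
    (hre : μ.re = (matSU A 0 0).re) : ∃ V : SU2, V * A * V⁻¹ = diagSU μ hμ := by
  obtain ⟨v, hv, hvA⟩ := exists_unit_vecMul_eq_smul (det_matSU_sub_smul_eq_zero A hμ hre)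
  exact ⟨mkSU (v 0) (v 1) hv, by rw [mul_inv_eq_iff_eq_mul, mkSU_mul_eq_diagSU_mul A hμ hv hvA]⟩

lemma exists_normSq_eq_one_re_eq {z : ℂ} (hz : normSq z ≤ 1) :
    ∃ μ : ℂ, normSq μ = 1 ∧ μ.re = z.re := by
  have hre : z.re ^ 2 ≤ 1 := by
    rw [normSq_apply] at hz
    nlinarith [mul_self_nonneg z.im]
  refine ⟨⟨z.re, Real.sqrt (1 - z.re ^ 2)⟩, ?_, rfl⟩
  rw [normSq_mk, Real.mul_self_sqrt (by linarith)]
  ring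

lemma normSq_matSU_zero_zero_le_one (A : SU2) : normSq (matSU A 0 0) ≤ 1 := by
  linarith [normSq_add_normSq_matSU A, normSq_nonneg (matSU A 0 1)]

lemma re_matSU_zero_zero_eq {A A' : SU2} (h : trSU A = trSU A') :
    (matSU A 0 0).re = (matSU A' 0 0).re := by
  rw [trSU_eq, trSU_eq] at h
  linarith

lemma isConj_of_trSU_eq {A A' : SU2} (h : trSU A = trSU A') : IsConj A A' := by
  obtain ⟨μ, hμ, hre⟩ := exists_normSq_eq_one_re_eq (normSq_matSU_zero_zero_le_one A)
  have hre' : μ.re = (matSU A' 0 0).re := hre.trans (re_matSU_zero_zero_eq h)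
  have hA := isConj_iff.mpr (exists_conj_eq_diagSU A hμ hre)
  have hA' := isConj_iff.mpr (exists_conj_eq_diagSU A' hμ hre')
  exact hA.trans hA'.symm

lemma diagSU_commute_of_im_eq_zero {μ : ℂ} (hμ : normSq μ = 1) (him : μ.im = 0) (C : SU2) :
    Commute (diagSU μ hμ) C := by
  have hconj : conj μ = μ := conj_eq_iff_im.mpr him
  apply matSU_injective
  rw [matSU_mul, matSU_mul, matSU_diagSU, hconj]
  ext i j
  fin_cases i <;> fin_cases j <;> simp [mul_apply, Fin.sum_univ_two, mul_comm]

lemma diagSU_commute_diagSU {μ ν : ℂ} (hμ : normSq μ = 1) (hν : normSq ν = 1) :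
    Commute (diagSU μ hμ) (diagSU ν hν) := by
  apply matSU_injective
  rw [matSU_mul, matSU_mul, matSU_diagSU, matSU_diagSU]
  ext i j
  fin_cases i <;> fin_cases j <;> simp [mul_apply, Fin.sum_univ_two, mul_comm]

lemma exists_normSq_eq_one_mul_eq_mul_conj {d d' : ℂ} (h : normSq d = normSq d') :
    ∃ ν : ℂ, normSq ν = 1 ∧ ν * d = d' * conj ν := by
  set θ : ℝ := (arg d' - arg d) / 2
  refine ⟨exp (θ * I), by rw [normSq_eq_norm_sq, norm_exp_ofReal_mul_I, one_pow], ?_⟩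
  have hnorm : ‖d‖ = ‖d'‖ := by
    rw [normSq_eq_norm_sq, normSq_eq_norm_sq] at h
    exact (pow_left_inj₀ (norm_nonneg _) (norm_nonneg _) two_ne_zero).mp h
  rw [← norm_mul_exp_arg_mul_I d, ← norm_mul_exp_arg_mul_I d', ← Complex.exp_conj, hnorm]
  simp only [map_mul, conj_ofReal, conj_I]
  have hexp : (θ : ℂ) * I + arg d * I = arg d' * I + θ * -I := by
    simp only [θ]
    push_cast
    ring
  rw [mul_left_comm, ← exp_add, hexp, exp_add, mul_assoc]

lemma exists_diagSU_conj_eq {C C' : SU2} (h : matSU C 0 0 = matSU C' 0 0) :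
    ∃ (ν : ℂ) (hν : normSq ν = 1), diagSU ν hν * C * (diagSU ν hν)⁻¹ = C' := by
  have hd : normSq (matSU C 0 1) = normSq (matSU C' 0 1) := by
    linarith [normSq_add_normSq_matSU C, normSq_add_normSq_matSU C', congrArg normSq h]
  obtain ⟨ν, hν, hνd⟩ := exists_normSq_eq_one_mul_eq_mul_conj hd
  refine ⟨ν, hν, mul_inv_eq_of_eq_mul ?_⟩
  have hc := congrArg conj hνd
  simp only [map_mul, conj_conj] at hc
  apply matSU_injective
  rw [matSU_mul, matSU_mul, matSU_diagSU, matSU_eq C, matSU_eq C', h]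
  ext i j
  fin_cases i <;> fin_cases j <;> simp [mul_apply, Fin.sum_univ_two]
  exacts [mul_comm _ _, hνd, hc, mul_comm _ _]

lemma matSU_zero_zero_eq_of_trSU_eq {μ : ℂ} (hμ : normSq μ = 1) (him : μ.im ≠ 0) {C C' : SU2}
    (h1 : trSU C = trSU C') (h2 : trSU (diagSU μ hμ * C) = trSU (diagSU μ hμ * C')) :
    matSU C 0 0 = matSU C' 0 0 := by
  have hre := re_matSU_zero_zero_eq h1
  rw [trSU_diagSU_mul, trSU_diagSU_mul, mul_re, mul_re, hre] at h2
  refine Complex.ext hre (mul_left_cancel₀ him ?_)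
  linarith

lemma exists_commute_conj_eq {μ : ℂ} (hμ : normSq μ = 1) {C C' : SU2}
    (h1 : trSU C = trSU C') (h2 : trSU (diagSU μ hμ * C) = trSU (diagSU μ hμ * C')) :
    ∃ M : SU2, Commute M (diagSU μ hμ) ∧ M * C * M⁻¹ = C' := by
  by_cases him : μ.im = 0
  · obtain ⟨M, hM⟩ := isConj_iff.mp (isConj_of_trSU_eq h1)
    exact ⟨M, (diagSU_commute_of_im_eq_zero hμ him M).symm, hM⟩
  · obtain ⟨ν, hν, hνC⟩ := exists_diagSU_conj_eq (matSU_zero_zero_eq_of_trSU_eq hμ him h1 h2)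
    exact ⟨diagSU ν hν, diagSU_commute_diagSU hν hμ, hνC⟩

lemma trSU_mul_conj_of_conj_eq {V X Y D : SU2} (h : V * X * V⁻¹ = D) :
    trSU (D * (V * Y * V⁻¹)) = trSU (X * Y) := by
  rw [← h, _root_.conj_mul, trSU_mul_mul_inv]

lemma eq_conj_of_conj_conj_eq {G : Type*} [Group G] {V V' M X X' : G}
    (h : M * (V * X * V⁻¹) * M⁻¹ = V' * X' * V'⁻¹) :
    X' = (V'⁻¹ * M * V) * X * (V'⁻¹ * M * V)⁻¹ := by
  calc X' = V'⁻¹ * (V' * X' * V'⁻¹) * V' := by group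
    _ = (V'⁻¹ * M * V) * X * (V'⁻¹ * M * V)⁻¹ := by rw [← h]; group

/-- Trace coordinates determine pairs in `SU(2)` up to simultaneous conjugation. -/
theorem trace_triple_determines_conjugacy (A B A' B' : SU2)
    (hx : trSU A = trSU A') (hy : trSU B = trSU B') (hz : trSU (A * B) = trSU (A' * B')) :
    ∃ U : SU2, A' = U * A * U⁻¹ ∧ B' = U * B * U⁻¹ := by
  obtain ⟨μ, hμ, hre⟩ := exists_normSq_eq_one_re_eq (normSq_matSU_zero_zero_le_one A)
  obtain ⟨V, hV⟩ := exists_conj_eq_diagSU A hμ hre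
  obtain ⟨V', hV'⟩ := exists_conj_eq_diagSU A' hμ (hre.trans (re_matSU_zero_zero_eq hx))
  have hC : trSU (V * B * V⁻¹) = trSU (V' * B' * V'⁻¹) := by
    rw [trSU_mul_mul_inv, trSU_mul_mul_inv, hy]
  have hDC : trSU (diagSU μ hμ * (V * B * V⁻¹)) = trSU (diagSU μ hμ * (V' * B' * V'⁻¹)) := by
    rw [trSU_mul_conj_of_conj_eq hV, trSU_mul_conj_of_conj_eq hV', hz]
  obtain ⟨M, hMD, hMC⟩ := exists_commute_conj_eq hμ hC hDC
  have hMA : M * (V * A * V⁻¹) * M⁻¹ = V' * A' * V'⁻¹ := by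
    rw [hV, hV', hMD.mul_inv_cancel]
  exact ⟨V'⁻¹ * M * V, eq_conj_of_conj_conj_eq hMA, eq_conj_of_conj_conj_eq hMC⟩
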